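/- Assume (A2) and that σ₂(S^{d-1}) > 0. Then for every θ > 0, the layered stable Lévy measure ν satisfies ∫_{{z : ‖z‖ > 1}} e^{θ‖z‖} ν(dz) = ∞. (Exponential-moment part of Proposition 2.3: a layered stable distribution with σ₂ ≠ 0 has no finite exponential moments.) -/

import Mathlib

/-!
Where `c₂ ξ > 0`, (A2) says `q r ξ ~ c₂ ξ / r ^ (β + 1)`, so `exp (θ r) q r ξ → ∞` and
the radial integral over `r > 1` diverges. Since `∫ c₂ dσ > 0`, the directions with
`c₂ ξ > 0` carry positive `σ`-mass, so the outer integral is infinite as well.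
-/

open MeasureTheory Set Filter Topology
open scoped ENNReal

theorem tendsto_exp_mul_mul_atTop_of_tendsto_rpow_mul {θ s c : ℝ} {f : ℝ → ℝ}
    (hθ : 0 < θ) (hc : 0 < c) (hf : Tendsto (fun r => r ^ s * f r) atTop (𝓝 c)) :
    Tendsto (fun r => Real.exp (θ * r) * f r) atTop atTop := by
  refine ((tendsto_exp_mul_div_rpow_atTop s θ hθ).atTop_mul_pos hc hf).congr' ?_
  filter_upwards [eventually_gt_atTop 0] with r hr
  have : r ^ s ≠ 0 := (Real.rpow_pos_of_pos hr s).ne'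
  field_simp

theorem setLIntegral_Ioi_ofReal_eq_top_of_tendsto_atTop {g : ℝ → ℝ}
    (hg : Tendsto g atTop atTop) (a : ℝ) :
    ∫⁻ r in Ioi a, ENNReal.ofReal (g r) = ∞ := by
  obtain ⟨R, hR⟩ := eventually_atTop.1 (hg.eventually_ge_atTop 1)
  refine top_unique ?_
  calc ∞ = ∫⁻ _ in Ioi (max R a), 1 := by simp [Real.volume_Ioi]
    _ ≤ ∫⁻ r in Ioi (max R a), ENNReal.ofReal (g r) :=
        setLIntegral_mono' measurableSet_Ioi fun r hr =>
          ENNReal.one_le_ofReal.2 (hR r ((le_max_left R a).trans hr.le))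
    _ ≤ ∫⁻ r in Ioi a, ENNReal.ofReal (g r) :=
        lintegral_mono_set (Ioi_subset_Ioi (le_max_right R a))

section

variable {α : Type*} [MeasurableSpace α] {μ : Measure α} {c : α → ℝ}

theorem measure_setOf_pos_ne_zero_of_integral_pos (hc : 0 < ∫ x, c x ∂μ) :
    μ {x | 0 < c x} ≠ 0 := by
  intro h
  have hc_nonpos : c ≤ᵐ[μ] 0 := by
    filter_upwards [measure_eq_zero_iff_ae_notMem.1 h] with x hx
    exact not_lt.1 hx
  exact (integral_nonpos_of_ae hc_nonpos).not_gt hc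

theorem lintegral_eq_top_of_integral_pos {F : α → ℝ≥0∞} (hc : 0 < ∫ x, c x ∂μ)
    (hF : ∀ x, 0 < c x → F x = ∞) :
    ∫⁻ x, F x ∂μ = ∞ := by
  -- A non-integrable `c` would have Bochner integral `0`, so `hc` also gives measurability.
  have hS : NullMeasurableSet {x | 0 < c x} μ :=
    (Integrable.of_integral_ne_zero hc.ne').aemeasurable.nullMeasurable measurableSet_Ioi
  refine top_unique ?_
  calc ∞ = ∫⁻ x, {x | 0 < c x}.indicator (fun _ => ∞) x ∂μ := by
        rw [lintegral_indicator_const₀ hS, ENNReal.top_mul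
          (measure_setOf_pos_ne_zero_of_integral_pos hc)]
    _ ≤ ∫⁻ x, F x ∂μ := lintegral_mono fun x => indicator_le (fun x hx => (hF x hx).ge) x

end

theorem layered_stable_no_exponential_moments_general
    (d : ℕ)
    (σ : Measure (Metric.sphere (0 : EuclideanSpace ℝ (Fin d)) 1))
    (β : ℝ)
    (q : ℝ → Metric.sphere (0 : EuclideanSpace ℝ (Fin d)) 1 → ℝ)
    (c₂ : Metric.sphere (0 : EuclideanSpace ℝ (Fin d)) 1 → ℝ)
    (hA2 : ∀ ξ, Tendsto (fun r : ℝ => r ^ (β + 1) * q r ξ) atTop (nhds (c₂ ξ)))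
    (hσ₂_pos : 0 < ∫ ξ, c₂ ξ ∂σ) :
    ∀ θ : ℝ, 0 < θ →
      ∫⁻ ξ, (∫⁻ r in Ioi (1 : ℝ), ENNReal.ofReal (Real.exp (θ * r) * q r ξ)) ∂σ = ⊤ := by
  intro θ hθ
  refine lintegral_eq_top_of_integral_pos hσ₂_pos fun ξ hξ => ?_
  exact setLIntegral_Ioi_ofReal_eq_top_of_tendsto_atTop
    (tendsto_exp_mul_mul_atTop_of_tendsto_rpow_mul hθ hξ (hA2 ξ)) 1

/-- Exponential-moment part of Proposition 2.3: under (A2) with `σ₂(S^{d-1}) > 0`,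
the layered stable Lévy measure has infinite exponential moments outside the unit
ball, for every `θ > 0`. -/
theorem layered_stable_no_exponential_moments
    (d : ℕ) (hd : 1 ≤ d)
    (σ : Measure (Metric.sphere (0 : EuclideanSpace ℝ (Fin d)) 1))
    [IsFiniteMeasure σ]
    (β : ℝ) (hβ : 0 < β)
    (q : ℝ → Metric.sphere (0 : EuclideanSpace ℝ (Fin d)) 1 → ℝ)
    (hq_meas : Measurable (Function.uncurry q))
    (hq_pos : ∀ r : ℝ, 0 < r → ∀ ξ, 0 < q r ξ)
    (c₂ : Metric.sphere (0 : EuclideanSpace ℝ (Fin d)) 1 → ℝ)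
    (hc₂_nonneg : ∀ ξ, 0 ≤ c₂ ξ) (hc₂_int : Integrable c₂ σ)
    (hA2 : ∀ ξ, Tendsto (fun r : ℝ => r ^ (β + 1) * q r ξ) atTop (nhds (c₂ ξ)))
    (hσ₂_pos : 0 < ∫ ξ, c₂ ξ ∂σ) :
    ∀ θ : ℝ, 0 < θ →
      ∫⁻ ξ, (∫⁻ r in Ioi (1 : ℝ), ENNReal.ofReal (Real.exp (θ * r) * q r ξ)) ∂σ = ⊤ :=
  layered_stable_no_exponential_moments_general d σ β q c₂ hA2 hσ₂_pos
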